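/- Let S : Δ → ℝ³ be a strictly proper scoring rule satisfying the technical assumptions, and let q₀ be any point in the relative interior of Δ. Then there exist a budget b > 0, a report r ∈ Δ with nb(q₀, r) ≤ b, and a nonempty set N of beliefs, open in Δ, such that for every p ∈ N, r is the unique optimal budget-constrained report: for every q ∈ Δ with q ≠ r and nb(q₀, q) ≤ b, one has p·S(r) > p·S(q). -/

import Mathlib

open scoped BigOperators

noncomputable section

/-- The probability simplex over the three outcomes `X, Y, Z` (identified with `0, 1, 2`). -/
def simplex3 : Set (Fin 3 → ℝ) := {q | (∀ i, 0 ≤ q i) ∧ ∑ i, q i = 1}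

/-- The relative interior of the simplex: all coordinates strictly positive. -/
def relint3 : Set (Fin 3 → ℝ) := {q | (∀ i, 0 < q i) ∧ ∑ i, q i = 1}

/-- Dot product of two vectors in `ℝ³`. -/
def dot3 (p s : Fin 3 → ℝ) : ℝ := ∑ i, p i * s i

/-- A scoring rule `S : Δ → ℝ³` is strictly proper if for all `p ≠ q` in the simplex,
`p·S(p) > p·S(q)`. -/
def StrictlyProper3 (S : (Fin 3 → ℝ) → Fin 3 → ℝ) : Prop :=
  ∀ p ∈ simplex3, ∀ q ∈ simplex3, p ≠ q → dot3 p (S q) < dot3 p (S p)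

/-- Each component `S_i` is quasiconcave: `S_i(½p + ½q) ≥ min (S_i p) (S_i q)`, with equality
only if `S_i p = S_i q`. -/
def QuasiConcave3 (S : (Fin 3 → ℝ) → Fin 3 → ℝ) : Prop :=
  ∀ i : Fin 3, ∀ p ∈ simplex3, ∀ q ∈ simplex3,
    min (S p i) (S q i) ≤ S ((1/2 : ℝ) • p + (1/2 : ℝ) • q) i ∧
    (S ((1/2 : ℝ) • p + (1/2 : ℝ) • q) i = min (S p i) (S q i) → S p i = S q i)

/-- The technical assumptions: continuity on the simplex, differentiability on its relative
interior, and componentwise quasiconcavity. -/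
def Tech3 (S : (Fin 3 → ℝ) → Fin 3 → ℝ) : Prop :=
  ContinuousOn S simplex3 ∧ DifferentiableOn ℝ S relint3 ∧ QuasiConcave3 S

/-- The natural budget required to move from `q₀` to `q`: the worst-case loss
`max_i (S_i(q₀) − S_i(q))`. -/
def nb3 (S : (Fin 3 → ℝ) → Fin 3 → ℝ) (q₀ q : Fin 3 → ℝ) : ℝ :=
  max (S q₀ 0 - S q 0) (max (S q₀ 1 - S q 1) (S q₀ 2 - S q 2))

/-- The budget-constrained truthfulness property: for every belief `p`, reference point `q₀`
and budget `b > 0`, the expected score `p·S(q)` over feasible reports (`q ∈ Δ` with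
`nb(q₀,q) ≤ b`) is uniquely maximized at `q* = α p + (1−α) q₀`, where `α` is the largest
element of `{α ∈ [0,1] : nb(q₀, α p + (1−α) q₀) ≤ b}`. -/
def BCT3 (S : (Fin 3 → ℝ) → Fin 3 → ℝ) : Prop :=
  ∀ p ∈ simplex3, ∀ q₀ ∈ simplex3, ∀ b : ℝ, 0 < b →
    ∃ α : ℝ,
      IsGreatest {a : ℝ | a ∈ Set.Icc (0:ℝ) 1 ∧
        nb3 S q₀ (a • p + (1 - a) • q₀) ≤ b} α ∧
      ∀ q ∈ simplex3, nb3 S q₀ q ≤ b → q ≠ α • p + (1 - α) • q₀ →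
        dot3 p (S q) < dot3 p (S (α • p + (1 - α) • q₀))

/-!
Fix `q₀` in the interior and let `C m` be the set of reports at which the `m`-th loss
`S_m(q₀) − S_m(q)` attains the natural budget. The sets `C m` are closed and cover `Δ`.
By strict properness and quasiconcavity, the midpoint `P m` of `q₀` and the vertex `e_m`
strictly raises `S_m` while having positive budget, so `P m ∉ C m`. Hence the connected path
`P 0 — P 1 — P 2` cannot lie in a single `C m`, and so contains a report `r ≠ q₀` at which
two losses `i ≠ j` are binding. Any feasible `q ≠ r` then has `S_i(q) ≥ S_i(r)` and
`S_j(q) ≥ S_j(r)`, so by properness at `r` it must lose on the third outcome `k`. Hence `r` is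
the unique optimum for every belief that puts less weight than `r` on `i` and `j` and more
on `k`.
-/

open Set

theorem IsPreconnected.exists_subset_of_disjoint_closed_cover {X ι : Type*}
    [TopologicalSpace X] [Finite ι] {s : Set X} {C : ι → Set X} (hs : IsPreconnected s)
    (hne : s.Nonempty) (hC : ∀ i, IsClosed (C i)) (hcover : s ⊆ ⋃ i, C i)
    (hdisj : ∀ x ∈ s, ∀ i j, x ∈ C i → x ∈ C j → i = j) : ∃ i, s ⊆ C i := by
  obtain ⟨x, hx⟩ := hne
  obtain ⟨i, hxi⟩ := mem_iUnion.1 (hcover hx)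
  have hrest : IsClosed (⋃ j ∈ ({i}ᶜ : Set ι), C j) :=
    (toFinite _).isClosed_biUnion fun j _ => hC j
  refine ⟨i, ((isPreconnected_iff_subset_of_disjoint_closed.1 hs) _ _ (hC i) hrest ?_ ?_)
    |>.resolve_right fun hsub => ?_⟩
  · intro y hy
    obtain ⟨j, hyj⟩ := mem_iUnion.1 (hcover hy)
    by_cases hji : j = i
    · exact Or.inl (hji ▸ hyj)
    · exact Or.inr (mem_biUnion hji hyj)
  · refine eq_empty_of_forall_notMem fun y ⟨hy, hyi, hyrest⟩ => ?_
    obtain ⟨j, hji, hyj⟩ := mem_iUnion₂.1 hyrest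
    exact hji (hdisj y hy j i hyj hyi)
  · obtain ⟨j, hji, hxj⟩ := mem_iUnion₂.1 (hsub hx)
    exact hji (hdisj x hx j i hxj hxi)

theorem apply_eq_of_mem_segment {ι : Type*} {x y z : ι → ℝ} {c : ι} {t : ℝ} (hx : x c = t)
    (hy : y c = t) (hz : z ∈ segment ℝ x y) : z c = t := by
  obtain ⟨a, b, -, -, hab, rfl⟩ := hz
  simp [hx, hy, ← add_mul, hab]

theorem Fin.sum_univ_three_of_ne {M : Type*} [AddCommMonoid M] {i j k : Fin 3} (hij : i ≠ j)
    (hik : i ≠ k) (hjk : j ≠ k) (f : Fin 3 → M) : ∑ m, f m = f i + f j + f k := by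
  fin_cases i <;> fin_cases j <;> fin_cases k <;> simp_all [Fin.sum_univ_three] <;> abel

theorem Fin.exists_ne_ne_three (i j : Fin 3) : ∃ k, i ≠ k ∧ j ≠ k := by
  revert i j; decide

section ScoringRule

variable {S : (Fin 3 → ℝ) → Fin 3 → ℝ} {q₀ q r : Fin 3 → ℝ}

theorem relint3_subset_simplex3 : relint3 ⊆ simplex3 :=
  fun _ hq => ⟨fun i => (hq.1 i).le, hq.2⟩

theorem convex_relint3 : Convex ℝ relint3 := by
  refine fun x hx y hy a b ha hb hab => ⟨fun m => ?_, ?_⟩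
  · simp only [Pi.add_apply, Pi.smul_apply, smul_eq_mul]
    have hmin := lt_min (hx.1 m) (hy.1 m)
    nlinarith [mul_le_mul_of_nonneg_left (min_le_left (x m) (y m)) ha,
      mul_le_mul_of_nonneg_left (min_le_right (x m) (y m)) hb]
  · exact (convex_stdSimplex ℝ (Fin 3) (relint3_subset_simplex3 hx)
      (relint3_subset_simplex3 hy) ha hb hab).2

theorem dot3_single (i : Fin 3) (s : Fin 3 → ℝ) : dot3 (Pi.single i 1) s = s i := by
  simp [dot3, Pi.single_apply]

theorem nb3_le_iff {b : ℝ} : nb3 S q₀ q ≤ b ↔ ∀ m, S q₀ m - S q m ≤ b := by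
  simp [nb3, Fin.forall_fin_succ]

theorem exists_nb3_eq (S : (Fin 3 → ℝ) → Fin 3 → ℝ) (q₀ q : Fin 3 → ℝ) :
    ∃ m, nb3 S q₀ q = S q₀ m - S q m := by
  unfold nb3
  rcases max_choice (S q₀ 0 - S q 0) (max (S q₀ 1 - S q 1) (S q₀ 2 - S q 2)) with h | h
  · exact ⟨0, h⟩
  rcases max_choice (S q₀ 1 - S q 1) (S q₀ 2 - S q 2) with h' | h'
  · exact ⟨1, h.trans h'⟩
  · exact ⟨2, h.trans h'⟩

theorem continuousOn_nb3 (hS : ContinuousOn S simplex3) (q₀ : Fin 3 → ℝ) :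
    ContinuousOn (nb3 S q₀) simplex3 := by
  have h : ∀ m : Fin 3, ContinuousOn (fun q => S q₀ m - S q m) simplex3 :=
    fun m => continuousOn_const.sub ((continuous_apply m).comp_continuousOn hS)
  exact (h 0).sup ((h 1).sup (h 2))

theorem StrictlyProper3.nb3_pos (hSP : StrictlyProper3 S) (hq₀ : q₀ ∈ simplex3)
    (hq : q ∈ simplex3) (hne : q ≠ q₀) : 0 < nb3 S q₀ q := by
  by_contra! hle
  have hmono : dot3 q₀ (S q₀) ≤ dot3 q₀ (S q) :=
    Finset.sum_le_sum fun m _ => mul_le_mul_of_nonneg_left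
      (by linarith [nb3_le_iff.1 hle m]) (hq₀.1 m)
  exact (hSP q₀ hq₀ q hq hne.symm).not_ge hmono

theorem StrictlyProper3.apply_lt_apply_single (hSP : StrictlyProper3 S) (hq : q ∈ simplex3)
    {i : Fin 3} (hne : q ≠ Pi.single i 1) : S q i < S (Pi.single i 1) i := by
  simpa [dot3_single] using hSP _ (single_mem_stdSimplex ℝ i) q hq hne.symm

theorem QuasiConcave3.lt_apply_midpoint (hqc : QuasiConcave3 S) {p : Fin 3 → ℝ}
    (hp : p ∈ simplex3) (hq : q ∈ simplex3) {i : Fin 3} (h : S p i < S q i) :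
    S p i < S ((1/2 : ℝ) • p + (1/2 : ℝ) • q) i := by
  obtain ⟨hle, heq⟩ := hqc i p hp q hq
  rw [min_eq_left h.le] at hle heq
  exact hle.lt_of_ne fun h' => h.ne (heq h'.symm)

def bindingSet (S : (Fin 3 → ℝ) → Fin 3 → ℝ) (q₀ : Fin 3 → ℝ) (m : Fin 3) :
    Set (Fin 3 → ℝ) :=
  {q ∈ simplex3 | nb3 S q₀ q ≤ S q₀ m - S q m}

theorem isClosed_bindingSet (hS : ContinuousOn S simplex3) (q₀ : Fin 3 → ℝ) (m : Fin 3) :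
    IsClosed (bindingSet S q₀ m) :=
  (isClosed_stdSimplex ℝ (Fin 3)).isClosed_le (continuousOn_nb3 hS q₀)
    (continuousOn_const.sub ((continuous_apply m).comp_continuousOn hS))

theorem simplex3_subset_iUnion_bindingSet :
    simplex3 ⊆ ⋃ m, bindingSet S q₀ m := fun q hq =>
  let ⟨m, hm⟩ := exists_nb3_eq S q₀ q
  mem_iUnion.2 ⟨m, hq, hm.le⟩

theorem apply_le_of_mem_bindingSet {i : Fin 3} (hr : r ∈ bindingSet S q₀ i)
    (hq : nb3 S q₀ q ≤ nb3 S q₀ r) : S r i ≤ S q i := by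
  linarith [nb3_le_iff.1 hq i, hr.2]

def midpointToVertex (q₀ : Fin 3 → ℝ) (m : Fin 3) : Fin 3 → ℝ :=
  (1/2 : ℝ) • q₀ + (1/2 : ℝ) • Pi.single m 1

theorem midpointToVertex_apply_of_ne {m c : Fin 3} (hcm : c ≠ m) :
    midpointToVertex q₀ m c = q₀ c / 2 := by
  simp only [midpointToVertex, Pi.add_apply, Pi.smul_apply, smul_eq_mul,
    Pi.single_eq_of_ne hcm, mul_zero, add_zero]
  ring

theorem midpointToVertex_mem_relint3 (hq₀ : q₀ ∈ relint3) (m : Fin 3) :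
    midpointToVertex q₀ m ∈ relint3 :=
  ⟨fun c => by
    simp only [midpointToVertex, Pi.add_apply, Pi.smul_apply, smul_eq_mul]
    nlinarith [hq₀.1 c, (single_mem_stdSimplex ℝ m).1 c],
   (convex_stdSimplex ℝ (Fin 3) (relint3_subset_simplex3 hq₀) (single_mem_stdSimplex ℝ m)
    (by norm_num) (by norm_num) (by norm_num)).2⟩

theorem midpointToVertex_notMem_bindingSet (hSP : StrictlyProper3 S) (hqc : QuasiConcave3 S)
    (hq₀ : q₀ ∈ relint3) (m : Fin 3) : midpointToVertex q₀ m ∉ bindingSet S q₀ m := by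
  intro hm
  have hq₀' := relint3_subset_simplex3 hq₀
  obtain ⟨c, hcm, -⟩ := Fin.exists_ne_ne_three m m
  have hq₀ne : q₀ ≠ Pi.single m 1 := fun h => (hq₀.1 c).ne' (by simp [h, hcm.symm])
  have hPne : midpointToVertex q₀ m ≠ q₀ := fun h => by
    have := congrFun h c
    rw [midpointToVertex_apply_of_ne hcm.symm] at this
    linarith [hq₀.1 c]
  have hgain : S q₀ m < S (midpointToVertex q₀ m) m :=
    hqc.lt_apply_midpoint hq₀' (single_mem_stdSimplex ℝ m)
      (hSP.apply_lt_apply_single hq₀' hq₀ne)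
  linarith [hm.2, hSP.nb3_pos hq₀' (relint3_subset_simplex3
    (midpointToVertex_mem_relint3 hq₀ m)) hPne]

theorem exists_mem_bindingSet_inter (hSP : StrictlyProper3 S) (hS : ContinuousOn S simplex3)
    (hqc : QuasiConcave3 S) (hq₀ : q₀ ∈ relint3) :
    ∃ r ∈ relint3, r ≠ q₀ ∧
      ∃ i j, i ≠ j ∧ r ∈ bindingSet S q₀ i ∧ r ∈ bindingSet S q₀ j := by
  set P := midpointToVertex q₀
  have hPrel := midpointToVertex_mem_relint3 hq₀
  set τ := segment ℝ (P 0) (P 1) ∪ segment ℝ (P 1) (P 2)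
  have hτrel : τ ⊆ relint3 := union_subset
    (convex_relint3.segment_subset (hPrel 0) (hPrel 1))
    (convex_relint3.segment_subset (hPrel 1) (hPrel 2))
  -- each segment keeps one coordinate at half that of `q₀`
  have hτq₀ : ∀ z ∈ τ, z ≠ q₀ := by
    rintro z (hz | hz) rfl
    · have h2 : z 2 = z 2 / 2 := apply_eq_of_mem_segment
        (midpointToVertex_apply_of_ne (by decide)) (midpointToVertex_apply_of_ne (by decide)) hz
      linarith [hq₀.1 2]
    · have h0 : z 0 = z 0 / 2 := apply_eq_of_mem_segment
        (midpointToVertex_apply_of_ne (by decide)) (midpointToVertex_apply_of_ne (by decide)) hz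
      linarith [hq₀.1 0]
  have hτconn : IsPreconnected τ :=
    (convex_segment _ _).isPreconnected.union (P 1) (right_mem_segment ℝ _ _)
      (left_mem_segment ℝ _ _) (convex_segment _ _).isPreconnected
  by_contra! h
  obtain ⟨m, hm⟩ := hτconn.exists_subset_of_disjoint_closed_cover
    ⟨P 0, Or.inl (left_mem_segment ℝ _ _)⟩ (isClosed_bindingSet hS q₀)
    ((hτrel.trans relint3_subset_simplex3).trans simplex3_subset_iUnion_bindingSet)
    fun z hz i j hi hj => by_contra fun hij => h z (hτrel hz) (hτq₀ z hz) i j hij hi hj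
  have hPτ : ∀ m, P m ∈ τ := by
    intro m
    fin_cases m
    · exact Or.inl (left_mem_segment ℝ _ _)
    · exact Or.inl (right_mem_segment ℝ _ _)
    · exact Or.inr (right_mem_segment ℝ _ _)
  exact midpointToVertex_notMem_bindingSet hSP hqc hq₀ m (hm (hPτ m))

theorem StrictlyProper3.dot3_lt_of_le_of_le (hSP : StrictlyProper3 S) {p : Fin 3 → ℝ}
    (hr : r ∈ simplex3) (hq : q ∈ simplex3) (hqr : q ≠ r) {i j k : Fin 3} (hij : i ≠ j)
    (hik : i ≠ k) (hjk : j ≠ k) (hi : S r i ≤ S q i) (hj : S r j ≤ S q j)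
    (hpi : p i ≤ r i) (hpj : p j ≤ r j) (hpk : r k ≤ p k) :
    dot3 p (S q) < dot3 p (S r) := by
  have hprop := hSP r hr q hq hqr.symm
  simp only [dot3, Fin.sum_univ_three_of_ne hij hik hjk] at hprop ⊢
  -- properness at `r` forces a loss on `k`, the only outcome that is not binding
  have hk : S q k < S r k := by
    nlinarith [mul_nonneg (hr.1 i) (sub_nonneg.2 hi), mul_nonneg (hr.1 j) (sub_nonneg.2 hj),
      hr.1 k]
  nlinarith [mul_nonneg (sub_nonneg.2 hpi) (sub_nonneg.2 hi),
    mul_nonneg (sub_nonneg.2 hpj) (sub_nonneg.2 hj),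
    mul_nonneg (sub_nonneg.2 hpk) (sub_nonneg.2 hk.le)]

end ScoringRule

/-- Theorem `insensitive`: for any strictly proper scoring rule satisfying the
technical assumptions and any `q₀` in the relative interior of `Δ`, there exist a budget
`b > 0`, a feasible report `r ∈ Δ` with `nb(q₀, r) ≤ b`, and a nonempty set `N` of beliefs,
open in `Δ`, such that for every belief `p ∈ N`, the report `r` is the unique optimal
budget-constrained report: every feasible `q ≠ r` yields strictly lower expected score. -/
theorem stmt6 (S : (Fin 3 → ℝ) → Fin 3 → ℝ)
    (hSP : StrictlyProper3 S) (hTech : Tech3 S)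
    (q₀ : Fin 3 → ℝ) (hq₀ : q₀ ∈ relint3) :
    ∃ b : ℝ, 0 < b ∧ ∃ r ∈ simplex3, nb3 S q₀ r ≤ b ∧
      ∃ N : Set (Fin 3 → ℝ), N.Nonempty ∧
        (∃ U : Set (Fin 3 → ℝ), IsOpen U ∧ N = U ∩ simplex3) ∧
        ∀ p ∈ N, ∀ q ∈ simplex3, q ≠ r → nb3 S q₀ q ≤ b →
          dot3 p (S q) < dot3 p (S r) := by
  obtain ⟨hS, -, hqc⟩ := hTech
  obtain ⟨r, hr, hrq₀, i, j, hij, hri, hrj⟩ := exists_mem_bindingSet_inter hSP hS hqc hq₀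
  obtain ⟨k, hik, hjk⟩ := Fin.exists_ne_ne_three i j
  have hr' := relint3_subset_simplex3 hr
  have hrk : r k < 1 := by
    have := hr.2
    rw [Fin.sum_univ_three_of_ne hij hik hjk] at this
    linarith [hr.1 i, hr.1 j]
  refine ⟨nb3 S q₀ r, hSP.nb3_pos (relint3_subset_simplex3 hq₀) hr' hrq₀, r, hr', le_rfl,
    {p | p i < r i ∧ p j < r j ∧ r k < p k} ∩ simplex3,
    ⟨Pi.single k 1, ⟨?_, ?_, ?_⟩, single_mem_stdSimplex ℝ k⟩, ⟨_, ?_, rfl⟩, ?_⟩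
  · simpa [Pi.single_apply, hik] using hr.1 i
  · simpa [Pi.single_apply, hjk] using hr.1 j
  · simpa using hrk
  · exact (isOpen_lt (continuous_apply i) continuous_const).inter
      ((isOpen_lt (continuous_apply j) continuous_const).inter
        (isOpen_lt continuous_const (continuous_apply k)))
  · rintro p ⟨⟨hpi, hpj, hpk⟩, -⟩ q hq hqr hqb
    exact hSP.dot3_lt_of_le_of_le hr' hq hqr hij hik hjk (apply_le_of_mem_bindingSet hri hqb)
      (apply_le_of_mem_bindingSet hrj hqb) hpi.le hpj.le hpk.le
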